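/- arXiv:1808.06994 — 2 statements merged into one kernel-verified Lean document; each statement's English description precedes it below -/
import Mathlib

section
/- The open Euclidean ball B(I, 1/2) in ℍ centered at an imaginary unit I ∈ 𝕊 is slice-open but not connected in the slice-topology: it decomposes as the disjoint union of the two relatively slice-open sets B(I,1/2) ∩ ℂ_I and ⋃_{J ∈ 𝕊, J ≠ ±I} B(I,1/2) ∩ ℂ_J. -/
noncomputable section

abbrev Hq := Quaternion ℝ

/-- The sphere of imaginary units of the quaternions. -/
def SphereS : Set Hq := {q | q ^ 2 = -1}

/-- The identification of `ℂ` with the slice plane `ℂ_I = ℝ + ℝI`. -/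
def sliceEmb (I : Hq) : ℂ → Hq := fun z => (z.re : Hq) + (z.im : Hq) * I

/-- The slice complex plane `ℂ_I = ℝ + ℝI`. -/
def sliceC (I : Hq) : Set Hq := Set.range (sliceEmb I)

/-- The slice-topology on the quaternions: the quotient topology induced by the
canonical map from the disjoint union of the slices, i.e. the supremum of the
topologies coinduced by the parametrizations of the slices. -/
def sliceTopology : TopologicalSpace Hq :=
  ⨆ I ∈ SphereS, TopologicalSpace.coinduced (sliceEmb I) inferInstance

/-- The real line inside the quaternions. -/
def realLine : Set Hq := Set.range (fun x : ℝ => (x : Hq))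

/-- `g : ℂ → ℍ` (thought of as a function on the slice `ℂ_I`) is (left) holomorphic on
`U`: real differentiable with `∂ₓ g + I ∂_y g = 0`. -/
def SliceHolomorphicOn (I : Hq) (g : ℂ → Hq) (U : Set ℂ) : Prop :=
  ∀ z ∈ U, ∃ L : ℂ →L[ℝ] Hq, HasFDerivAt g L z ∧ L 1 + I * L Complex.I = 0

/-- A function on a slice-open set is slice regular if it is holomorphic on each slice. -/
def SliceRegular (f : Hq → Hq) (Ω : Set Hq) : Prop :=
  ∀ I ∈ SphereS, SliceHolomorphicOn I (f ∘ sliceEmb I) (sliceEmb I ⁻¹' Ω)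

/-- `K(m)` for `K ∈ 𝕊^N` (with `K 0 = 1` by convention) and `1 ≤ m ≤ 2^N`:
`∏_{i=N}^{1} (K_i K_{i-1})^{m_i}` where `(m_N … m_1)₂` is the binary expansion of `m-1`. -/
def zetaTerm (K : ℕ → Hq) (N m : ℕ) : Hq :=
  ((List.range N).reverse.map
    (fun j => (K (j + 1) * K j) ^ (if Nat.testBit (m - 1) j then 1 else 0))).prod

/-- The matrix `σ_N` (0-indexed): entry `(i,j)` is `(-1)^{N+(j+1)}` if
`(i+1)+(j+1) = 2^N + 1`, and `0` otherwise. -/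
def sigmaMat (N : ℕ) : Matrix (Fin (2 ^ N)) (Fin (2 ^ N)) ℝ :=
  Matrix.of fun i j =>
    if (i : ℕ) + (j : ℕ) = 2 ^ N - 1 then (-1 : ℝ) ^ (N + (j : ℕ) + 1) else 0

def QOrth (I J : Hq) : Prop := (I * star J).re = 0

/-!
A quaternion `a + bJ` with `b ≠ 0` determines its slice up to `J ↦ -J`, so two slices `ℂ_I` and
`ℂ_J` with `J ≠ ±I` meet only in `ℝ`, and every non-real quaternion lies on some slice. Since a
real `x` has `|x - I|² = x² + 1`, the ball `B = B(I, 1/2)` contains no real point; hence the union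
over `J ≠ ±I` is exactly `B \ ℂ_I`. Now `ℂ_I \ ℝ` is slice-open (no other slice meets it) and
`ℍ \ ℂ_I` is Euclidean open, so `B ∩ ℂ_I` and `B \ ℂ_I` are complementary slice-open pieces of
`B`; the second is nonempty because a plane has empty interior in `ℍ`.
-/

open Set Metric Quaternion
open scoped Topology

lemma mem_sphereS_iff {q : Hq} : q ∈ SphereS ↔ q.re = 0 ∧ ‖q‖ = 1 := by
  have hsq : q ^ 2 = -(‖q‖ * ‖q‖ : ℝ) ↔ q.re = 0 := by
    rw [← normSq_eq_norm_mul_self]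
    exact sq_eq_neg_normSq
  change q ^ 2 = -1 ↔ _
  constructor
  · intro hq
    have hnorm : ‖q‖ = 1 := by
      rw [← pow_eq_one_iff_of_nonneg (norm_nonneg q) two_ne_zero, ← norm_pow, hq, norm_neg,
        norm_one]
    exact ⟨hsq.1 (by rw [hq, hnorm, mul_one, coe_one]), hnorm⟩
  · rintro ⟨hre, hnorm⟩
    rw [hsq.2 hre, hnorm, mul_one, coe_one]

lemma sliceEmb_apply (I : Hq) (z : ℂ) : sliceEmb I z = (z.re : Hq) + z.im • I := by
  rw [sliceEmb, coe_mul_eq_smul]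

lemma self_mem_sliceC (I : Hq) : I ∈ sliceC I :=
  ⟨Complex.I, by simp [sliceEmb_apply]⟩

lemma re_sliceEmb {I : Hq} (hI : I.re = 0) (z : ℂ) : (sliceEmb I z).re = z.re := by
  simp [sliceEmb_apply, hI]

def sliceLinearMap (I : Hq) : ℂ →ₗ[ℝ] Hq where
  toFun := sliceEmb I
  map_add' z w := by
    simp only [sliceEmb_apply, Complex.add_re, Complex.add_im, coe_add, add_smul]
    abel
  map_smul' r z := by simp [sliceEmb_apply, smul_add, mul_smul, coe_mul_eq_smul]

lemma coe_sliceLinearMap (I : Hq) : ⇑(sliceLinearMap I) = sliceEmb I := rfl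

lemma sliceC_eq_range (I : Hq) : sliceC I = LinearMap.range (sliceLinearMap I) := by
  rw [LinearMap.coe_range, coe_sliceLinearMap, sliceC]

lemma continuous_sliceEmb (I : Hq) : Continuous (sliceEmb I) :=
  (sliceLinearMap I).continuous_of_finiteDimensional

lemma isClosed_sliceC (I : Hq) : IsClosed (sliceC I) := by
  rw [sliceC_eq_range]
  exact Submodule.closed_of_finiteDimensional _

lemma range_sliceLinearMap_ne_top (I : Hq) : LinearMap.range (sliceLinearMap I) ≠ ⊤ := by
  intro h
  have := (sliceLinearMap I).finrank_range_le
  rw [h, finrank_top, Quaternion.finrank_eq_four, Complex.finrank_real_complex] at this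
  omega

lemma IsOpen.nonempty_diff_sliceC {s : Set Hq} (hs : IsOpen s) (hne : s.Nonempty) (I : Hq) :
    (s \ sliceC I).Nonempty := by
  rw [nonempty_iff_ne_empty, Ne, sdiff_eq_empty]
  intro hsub
  apply range_sliceLinearMap_ne_top I
  apply Submodule.eq_top_of_nonempty_interior'
  rw [← sliceC_eq_range]
  exact hne.mono (interior_maximal hsub hs)

lemma isOpen_sliceTopology_iff {s : Set Hq} :
    IsOpen[sliceTopology] s ↔ ∀ J ∈ SphereS, IsOpen (sliceEmb J ⁻¹' s) := by
  unfold sliceTopology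
  simp only [isOpen_iSup_iff, isOpen_coinduced]

lemma IsOpen.isOpen_sliceTopology {s : Set Hq} (hs : IsOpen s) : IsOpen[sliceTopology] s :=
  isOpen_sliceTopology_iff.2 fun J _ => hs.preimage (continuous_sliceEmb J)

lemma mem_realLine_iff {q : Hq} : q ∈ realLine ↔ q.im = 0 := by
  constructor
  · rintro ⟨x, rfl⟩
    exact im_coe x
  · intro h
    exact ⟨q.re, by rw [← re_add_im q, h, add_zero, re_coe]⟩

lemma sliceEmb_mem_realLine_iff {I : Hq} (hI : I ∈ SphereS) {z : ℂ} :
    sliceEmb I z ∈ realLine ↔ z.im = 0 := by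
  obtain ⟨hre, hnorm⟩ := mem_sphereS_iff.1 hI
  have hIim : I.im = I := by rw [← re_add_im I, hre, coe_zero, zero_add, im_idem]
  have hI0 : I ≠ 0 := ne_of_apply_ne norm (by rw [hnorm, norm_zero]; exact one_ne_zero)
  rw [mem_realLine_iff, sliceEmb_apply, im_add, im_coe, zero_add, im_smul, hIim,
    smul_eq_zero, or_iff_left hI0]

lemma sliceC_neg (I : Hq) : sliceC (-I) = sliceC I := by
  have h : ∀ z, sliceEmb (-I) z = sliceEmb I ((starRingEnd ℂ) z) := fun z => by
    simp [sliceEmb_apply]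
  ext q
  constructor
  · rintro ⟨z, rfl⟩
    exact ⟨_, (h z).symm⟩
  · rintro ⟨z, rfl⟩
    exact ⟨(starRingEnd ℂ) z, by rw [h, Complex.conj_conj]⟩

lemma sliceC_inter_sliceC_subset_realLine {I J : Hq} (hI : I ∈ SphereS) (hJ : J ∈ SphereS)
    (hJI : J ≠ I) (hJI' : J ≠ -I) : sliceC I ∩ sliceC J ⊆ realLine := by
  obtain ⟨hIre, hInorm⟩ := mem_sphereS_iff.1 hI
  obtain ⟨hJre, hJnorm⟩ := mem_sphereS_iff.1 hJ
  rintro _ ⟨⟨z, rfl⟩, w, hw⟩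
  rw [sliceEmb_mem_realLine_iff hI]
  by_contra hz
  have hre : w.re = z.re := by rw [← re_sliceEmb hJre w, hw, re_sliceEmb hIre]
  have him : w.im • J = z.im • I := by simpa [sliceEmb_apply, hre] using hw
  have habs : |w.im| = |z.im| := by
    simpa [norm_smul, hInorm, hJnorm] using congrArg norm him
  rcases abs_eq_abs.1 habs with h | h
  · exact hJI (smul_right_injective Hq hz (show z.im • J = z.im • I by rwa [h] at him))
  · exact hJI' (smul_right_injective Hq hz
      (show z.im • J = z.im • -I by rwa [smul_neg, ← neg_eq_iff_eq_neg, ← neg_smul, ← h]))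

lemma exists_mem_sphereS_mem_sliceC {q : Hq} (hq : q ∉ realLine) :
    ∃ J ∈ SphereS, q ∈ sliceC J := by
  have hn : ‖q.im‖ ≠ 0 := norm_ne_zero_iff.2 (mt mem_realLine_iff.2 hq)
  refine ⟨‖q.im‖⁻¹ • q.im, mem_sphereS_iff.2 ⟨by simp, ?_⟩, ⟨q.re, ‖q.im‖⟩, ?_⟩
  · rw [norm_smul, norm_inv, norm_norm, inv_mul_cancel₀ hn]
  · rw [sliceEmb_apply, smul_smul, mul_inv_cancel₀ hn, one_smul]
    exact re_add_im q

lemma one_le_dist_coe {I : Hq} (hI : I ∈ SphereS) (x : ℝ) : 1 ≤ dist (x : Hq) I := by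
  obtain ⟨hre, hnorm⟩ := mem_sphereS_iff.1 hI
  have hinner : inner ℝ (x : Hq) I = 0 := by simp [inner_def, hre]
  have hdist : dist (x : Hq) I ^ 2 = x ^ 2 + 1 := by
    rw [dist_eq_norm, norm_sub_sq_real, hinner, hnorm, norm_coe, Real.norm_eq_abs, sq_abs]
    ring
  nlinarith [dist_nonneg (x := (x : Hq)) (y := I), sq_nonneg x]

lemma disjoint_ball_realLine {I : Hq} (hI : I ∈ SphereS) : Disjoint (ball I 1) realLine := by
  rw [disjoint_right]
  rintro _ ⟨x, rfl⟩ hx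
  exact (one_le_dist_coe hI x).not_gt (mem_ball.1 hx)

lemma biUnion_inter_sliceC_eq_diff {I : Hq} (hI : I ∈ SphereS) {s : Set Hq}
    (hs : Disjoint s realLine) : ⋃ J ∈ SphereS \ {I, -I}, s ∩ sliceC J = s \ sliceC I := by
  ext q
  simp only [mem_iUnion, mem_sdiff, mem_insert_iff, mem_singleton_iff, not_or, mem_inter_iff,
    exists_prop]
  constructor
  · rintro ⟨J, ⟨hJ, hJI, hJI'⟩, hqs, hqJ⟩
    exact ⟨hqs, fun hqI => hs.notMem_of_mem_left hqs
      (sliceC_inter_sliceC_subset_realLine hI hJ hJI hJI' ⟨hqI, hqJ⟩)⟩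
  · rintro ⟨hqs, hqI⟩
    obtain ⟨J, hJ, hqJ⟩ := exists_mem_sphereS_mem_sliceC (hs.notMem_of_mem_left hqs)
    refine ⟨J, ⟨hJ, ?_, ?_⟩, hqs, hqJ⟩
    · rintro rfl
      exact hqI hqJ
    · rintro rfl
      exact hqI (sliceC_neg I ▸ hqJ)

lemma isOpen_sliceTopology_sliceC_diff_realLine {I : Hq} (hI : I ∈ SphereS) :
    IsOpen[sliceTopology] (sliceC I \ realLine) := by
  rw [isOpen_sliceTopology_iff]
  intro K hK
  by_cases hKI : K = I ∨ K = -I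
  · have hC : sliceC K = sliceC I := by
      rcases hKI with rfl | rfl
      exacts [rfl, sliceC_neg I]
    have hpre : sliceEmb K ⁻¹' (sliceC I \ realLine) = {z | z.im ≠ 0} := by
      ext z
      have hz : sliceEmb K z ∈ sliceC I := hC ▸ mem_range_self z
      simp only [mem_preimage, mem_sdiff, hz, true_and, sliceEmb_mem_realLine_iff hK]
      rfl
    rw [hpre]
    exact isOpen_ne_fun Complex.continuous_im continuous_const
  · push Not at hKI
    have hpre : sliceEmb K ⁻¹' (sliceC I \ realLine) = ∅ :=
      eq_empty_of_forall_notMem fun z hz => hz.2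
        (sliceC_inter_sliceC_subset_realLine hI hK hKI.1 hKI.2 ⟨hz.1, mem_range_self z⟩)
    rw [hpre]
    exact isOpen_empty

lemma IsOpen.isOpen_sliceTopology_inter_sliceC {s : Set Hq} (hs : IsOpen s) {I : Hq}
    (hI : I ∈ SphereS) (hsR : Disjoint s realLine) : IsOpen[sliceTopology] (s ∩ sliceC I) := by
  rw [← (hsR.mono_left inter_subset_left).sdiff_eq_left, inter_sdiff_assoc]
  exact @IsOpen.inter Hq sliceTopology _ _ hs.isOpen_sliceTopology
    (isOpen_sliceTopology_sliceC_diff_realLine hI)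

lemma IsOpen.isOpen_sliceTopology_diff_sliceC {s : Set Hq} (hs : IsOpen s) (I : Hq) :
    IsOpen[sliceTopology] (s \ sliceC I) :=
  (hs.sdiff (isClosed_sliceC I)).isOpen_sliceTopology

lemma not_isPreconnected_of_isOpen_inter_of_isOpen_diff {X : Type*} [TopologicalSpace X]
    {s t : Set X} (h₁ : IsOpen (s ∩ t)) (h₂ : IsOpen (s \ t)) (hne₁ : (s ∩ t).Nonempty)
    (hne₂ : (s \ t).Nonempty) : ¬IsPreconnected s := fun hs => by
  obtain ⟨x, -, hx₁, hx₂⟩ := hs _ _ h₁ h₂ (inter_union_sdiff s t).ge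
    (hne₁.mono (subset_inter inter_subset_left subset_rfl))
    (hne₂.mono (subset_inter sdiff_subset subset_rfl))
  exact hx₂.2 hx₁.2

/-- The Euclidean ball `B(I,1/2)`, `I ∈ 𝕊`, is slice-open but not slice-connected:
it is the disjoint union of the two nonempty slice-open sets `B(I,1/2) ∩ ℂ_I` and
`⋃_{J ∈ 𝕊, J ≠ ±I} B(I,1/2) ∩ ℂ_J`. -/
theorem ball_not_sliceConnected (I : Hq) (hI : I ∈ SphereS) :
    @IsOpen Hq sliceTopology (Metric.ball I (1 / 2)) ∧
    Metric.ball I (1 / 2) =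
      (Metric.ball I (1 / 2) ∩ sliceC I) ∪
        (⋃ J ∈ SphereS \ {I, -I}, Metric.ball I (1 / 2) ∩ sliceC J) ∧
    Disjoint (Metric.ball I (1 / 2) ∩ sliceC I)
      (⋃ J ∈ SphereS \ {I, -I}, Metric.ball I (1 / 2) ∩ sliceC J) ∧
    @IsOpen Hq sliceTopology (Metric.ball I (1 / 2) ∩ sliceC I) ∧
    @IsOpen Hq sliceTopology (⋃ J ∈ SphereS \ {I, -I}, Metric.ball I (1 / 2) ∩ sliceC J) ∧
    (Metric.ball I (1 / 2) ∩ sliceC I).Nonempty ∧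
    (⋃ J ∈ SphereS \ {I, -I}, Metric.ball I (1 / 2) ∩ sliceC J).Nonempty ∧
    ¬ @IsPreconnected Hq sliceTopology (Metric.ball I (1 / 2)) := by
  have hB : IsOpen (ball I (1 / 2)) := isOpen_ball
  have hIB : I ∈ ball I (1 / 2) := mem_ball_self (by norm_num)
  have hBR : Disjoint (ball I (1 / 2)) realLine :=
    (disjoint_ball_realLine hI).mono_left (ball_subset_ball (by norm_num))
  rw [biUnion_inter_sliceC_eq_diff hI hBR]
  have hU := hB.isOpen_sliceTopology_inter_sliceC hI hBR
  have hV := hB.isOpen_sliceTopology_diff_sliceC I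
  have hUne : (ball I (1 / 2) ∩ sliceC I).Nonempty := ⟨I, hIB, self_mem_sliceC I⟩
  have hVne := hB.nonempty_diff_sliceC ⟨I, hIB⟩ I
  exact ⟨hB.isOpen_sliceTopology, (inter_union_sdiff _ _).symm,
    disjoint_sdiff_inter.symm, hU, hV, hUne, hVne,
    @not_isPreconnected_of_isOpen_inter_of_isOpen_diff Hq sliceTopology _ _ hU hV hUne hVne⟩
end
end

section
/- (Splitting Lemma for slice-open sets) Let Ω ⊆ ℍ be slice-open and f : Ω → ℍ. Then f is slice regular if and only if for all I, J ∈ 𝕊 with I ⊥ J there exist functions F, G : Ω ∩ ℂ_I → ℂ_I, holomorphic with respect to the complex structure of ℂ_I, such that f(z) = F(z) + G(z)J for all z ∈ Ω ∩ ℂ_I. -/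
noncomputable section

/-!
For orthogonal `I, J ∈ 𝕊` we have `J I = -I J`, so every quaternion splits as `q = x + y J`
with `x, y ∈ ℂ_I`, where `x = (q - I q I) / 2` and `y = -(q + I q I) J / 2`. These components
are ℝ-linear in `q` and commute with left multiplication by `I`, so they turn the slice
Cauchy–Riemann equation `L i = I L 1` of `f` into the complex Cauchy–Riemann equations of `F`
and `G`. Conversely `F + G J` is slice regular because right multiplication by `J` commutes
with left multiplication by `I`, and every `I ∈ 𝕊` has an orthogonal `J ∈ 𝕊`.
-/

open Quaternion

section SliceAlgebra

variable {I J : Hq}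

lemma mem_sphereS_iff_s10 : I ∈ SphereS ↔ I * I = -1 := by
  rw [SphereS, Set.mem_ofPred_eq, sq]

lemma mul_self_eq_neg_one_iff :
    I * I = -1 ↔ I.re = 0 ∧ I.imI ^ 2 + I.imJ ^ 2 + I.imK ^ 2 = 1 := by
  constructor
  · intro h
    have h1 := congrArg QuaternionAlgebra.re h
    have h2 := congrArg QuaternionAlgebra.imI h
    have h3 := congrArg QuaternionAlgebra.imJ h
    have h4 := congrArg QuaternionAlgebra.imK h
    simp only [re_mul, imI_mul, imJ_mul, imK_mul, re_neg, imI_neg, imJ_neg, imK_neg, re_one,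
      imI_one, imJ_one, imK_one] at h1 h2 h3 h4
    have hre : I.re = 0 := by
      nlinarith [sq_nonneg I.re, sq_nonneg I.imI, sq_nonneg I.imJ, sq_nonneg I.imK]
    exact ⟨hre, by nlinarith⟩
  · rintro ⟨hre, hnorm⟩
    ext <;> simp [re_mul, imI_mul, imJ_mul, imK_mul, hre] <;> nlinarith

lemma qOrth_iff :
    QOrth I J ↔ I.re * J.re + I.imI * J.imI + I.imJ * J.imJ + I.imK * J.imK = 0 := by
  simp only [QOrth, re_mul, re_star, imI_star, imJ_star, imK_star]
  ring_nf

lemma anticommute_of_qOrth (hI : I * I = -1) (hJ : J * J = -1) (h : QOrth I J) :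
    J * I = -(I * J) := by
  have hIre := (mul_self_eq_neg_one_iff.mp hI).1
  have hJre := (mul_self_eq_neg_one_iff.mp hJ).1
  rw [qOrth_iff, hIre, hJre] at h
  ext <;> simp [re_mul, imI_mul, imJ_mul, imK_mul, hIre, hJre] <;> linarith

lemma exists_qOrth (hI : I * I = -1) : ∃ J, J * J = -1 ∧ QOrth I J := by
  obtain ⟨hre, hnorm⟩ := mul_self_eq_neg_one_iff.mp hI
  by_cases hc : I.imJ ^ 2 + I.imK ^ 2 = 0
  · refine ⟨(⟨0, 0, 1, 0⟩ : ℍ[ℝ]), mul_self_eq_neg_one_iff.mpr (by norm_num), ?_⟩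
    have hJ : I.imJ = 0 := by nlinarith [sq_nonneg I.imJ, sq_nonneg I.imK]
    exact qOrth_iff.mpr (by simp [hJ, hre])
  · set s := Real.sqrt (I.imJ ^ 2 + I.imK ^ 2)
    have hs : s ^ 2 = I.imJ ^ 2 + I.imK ^ 2 := Real.sq_sqrt (by positivity)
    have hs0 : s ≠ 0 := fun h => hc (by rw [← hs, h]; ring)
    refine ⟨(⟨0, 0, -I.imK / s, I.imJ / s⟩ : ℍ[ℝ]),
      mul_self_eq_neg_one_iff.mpr ⟨rfl, ?_⟩, ?_⟩
    · field_simp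
      linarith
    · refine qOrth_iff.mpr ?_
      simp only [hre]
      field_simp
      ring

end SliceAlgebra

section SliceProjection

variable {I : Hq}

lemma sliceEmb_I_mul (hI : I * I = -1) (z : ℂ) :
    sliceEmb I (Complex.I * z) = I * sliceEmb I z := by
  have hre : I * (z.re : Hq) = z.re * I := (coe_commutes z.re I).symm
  have him : I * ((z.im : Hq) * I) = -z.im := by
    rw [← mul_assoc, ← coe_commutes, mul_assoc, hI, mul_neg_one]
  simp only [sliceEmb, Complex.I_mul_re, Complex.I_mul_im, mul_add, hre, him]
  push_cast
  abel

variable (I) in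
def sliceEmbCLM : ℂ →L[ℝ] Hq :=
  LinearMap.toContinuousLinearMap
    { toFun := sliceEmb I
      map_add' := fun z w => by
        simp only [sliceEmb, Complex.add_re, Complex.add_im]
        push_cast
        noncomm_ring
      map_smul' := fun r z => by
        simp only [sliceEmb, Complex.smul_re, Complex.smul_im, smul_eq_mul, RingHom.id_apply]
        push_cast
        rw [smul_add, ← coe_mul_eq_smul, ← coe_mul_eq_smul, mul_assoc] }

@[simp] lemma sliceEmbCLM_apply (z : ℂ) : sliceEmbCLM I z = sliceEmb I z := rfl

-- On `ℂ_I` this inverts `sliceEmb I`: the `I`-coordinate of `q = x + y I` is `-(q * I).re = y`.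
variable (I) in
def sliceProj : Hq →L[ℝ] ℂ :=
  LinearMap.toContinuousLinearMap
    { toFun := fun q => ⟨q.re, -(q * I).re⟩
      map_add' := fun p q => by apply Complex.ext <;> simp [add_mul]; ring
      map_smul' := fun r q => by apply Complex.ext <;> simp; ring }

@[simp] lemma sliceProj_apply (q : Hq) : sliceProj I q = ⟨q.re, -(q * I).re⟩ := rfl

lemma sliceProj_mul_left (hI : I * I = -1) (q : Hq) :
    sliceProj I (I * q) = Complex.I * sliceProj I q := by
  have hre : (I * q).re = (q * I).re := by simp only [re_mul]; ring
  have him : (I * q * I).re = -q.re := by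
    rw [mul_assoc, show (I * (q * I)).re = (q * I * I).re by simp only [re_mul]; ring,
      mul_assoc, hI, mul_neg_one, re_neg]
  apply Complex.ext <;> simp [hre, him]

lemma sliceEmb_sliceProj (hI : I * I = -1) {q : Hq} (hq : Commute I q) :
    sliceEmb I (sliceProj I q) = q := by
  obtain ⟨hre, hnorm⟩ := mul_self_eq_neg_one_iff.mp hI
  have h2 := congrArg QuaternionAlgebra.imI hq.eq
  have h3 := congrArg QuaternionAlgebra.imJ hq.eq
  have h4 := congrArg QuaternionAlgebra.imK hq.eq
  simp only [imI_mul, imJ_mul, imK_mul, hre] at h2 h3 h4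
  ext <;> simp [sliceEmb, re_mul, imI_mul, imJ_mul, imK_mul, hre]
  · linear_combination q.imI * hnorm + (I.imJ * h4 - I.imK * h3) / 2
  · linear_combination q.imJ * hnorm + (I.imK * h2 - I.imI * h4) / 2
  · linear_combination q.imK * hnorm + (I.imI * h3 - I.imJ * h2) / 2

end SliceProjection

section Splitting

variable {I J : Hq}

variable (I) in
def splitFst : Hq →L[ℝ] Hq :=
  (1 / 2 : ℝ) •
    (1 - (ContinuousLinearMap.mul ℝ Hq).flip I ∘L ContinuousLinearMap.mul ℝ Hq I)

variable (I J) in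
def splitSnd : Hq →L[ℝ] Hq :=
  -((ContinuousLinearMap.mul ℝ Hq).flip J ∘L
    ((1 / 2 : ℝ) •
      (1 + (ContinuousLinearMap.mul ℝ Hq).flip I ∘L ContinuousLinearMap.mul ℝ Hq I)))

lemma splitFst_apply (q : Hq) : splitFst I q = (1 / 2 : ℝ) • (q - I * q * I) := by
  simp [splitFst]

lemma splitSnd_apply (q : Hq) : splitSnd I J q = -((1 / 2 : ℝ) • (q + I * q * I) * J) := by
  simp [splitSnd, add_mul]

lemma splitFst_mul_left (q : Hq) : splitFst I (I * q) = I * splitFst I q := by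
  simp only [splitFst_apply, mul_smul_comm]
  noncomm_ring

lemma splitSnd_mul_left (q : Hq) : splitSnd I J (I * q) = I * splitSnd I J q := by
  simp only [splitSnd_apply, mul_neg, mul_smul_comm, smul_mul_assoc]
  noncomm_ring

lemma commute_splitFst (hI : I * I = -1) (q : Hq) : Commute I (splitFst I q) := by
  have h1 : I * (I * q * I) = -(q * I) := by rw [← mul_assoc, ← mul_assoc, hI]; noncomm_ring
  have h2 : I * q * I * I = -(I * q) := by rw [mul_assoc, hI]; noncomm_ring
  simp only [Commute, SemiconjBy, splitFst_apply, mul_smul_comm, smul_mul_assoc, mul_sub,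
    sub_mul, h1, h2]
  abel_nf

lemma commute_splitSnd (hI : I * I = -1) (hIJ : J * I = -(I * J)) (q : Hq) :
    Commute I (splitSnd I J q) := by
  have h1 : I * (q + I * q * I) = I * q - q * I := by
    rw [mul_add, ← mul_assoc, ← mul_assoc, hI]; noncomm_ring
  have h2 : (q + I * q * I) * I = q * I - I * q := by
    rw [add_mul, mul_assoc _ I I, hI]; noncomm_ring
  simp only [Commute, SemiconjBy, splitSnd_apply, mul_neg, neg_mul, mul_smul_comm,
    smul_mul_assoc, ← mul_assoc, h1]
  rw [mul_assoc _ J I, hIJ, mul_neg, ← mul_assoc, h2]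
  noncomm_ring

lemma splitFst_add_splitSnd_mul (hJ : J * J = -1) (q : Hq) :
    splitFst I q + splitSnd I J q * J = q := by
  rw [splitFst_apply, splitSnd_apply, neg_mul, mul_assoc _ J J, hJ, mul_neg_one, neg_neg]
  module

end Splitting

section SliceHolomorphic

variable {I : Hq} {U : Set ℂ} {g h : ℂ → Hq}

lemma cauchyRiemann_iff (hI : I * I = -1) {L : ℂ →L[ℝ] Hq} :
    L 1 + I * L Complex.I = 0 ↔ L Complex.I = I * L 1 := by
  constructor
  · intro hL
    rw [← neg_neg (L Complex.I), ← neg_one_mul (L Complex.I), ← hI, mul_assoc,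
      eq_neg_of_add_eq_zero_right hL, mul_neg, neg_neg]
  · intro hL
    rw [hL, ← mul_assoc, hI, neg_one_mul, add_neg_cancel]

lemma SliceHolomorphicOn.add (hg : SliceHolomorphicOn I g U) (hh : SliceHolomorphicOn I h U) :
    SliceHolomorphicOn I (g + h) U := by
  intro z hz
  obtain ⟨L, hL, hLI⟩ := hg z hz
  obtain ⟨M, hM, hMI⟩ := hh z hz
  refine ⟨L + M, hL.add hM, ?_⟩
  rw [FunLike.coe_add, Pi.add_apply, Pi.add_apply, mul_add, add_add_add_comm, hLI,
    hMI, add_zero]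

lemma SliceHolomorphicOn.mul_const (hg : SliceHolomorphicOn I g U) (a : Hq) :
    SliceHolomorphicOn I (fun z => g z * a) U := by
  intro z hz
  obtain ⟨L, hL, hLI⟩ := hg z hz
  refine ⟨(ContinuousLinearMap.mul ℝ Hq).flip a ∘L L,
    ((ContinuousLinearMap.mul ℝ Hq).flip a).hasFDerivAt.comp z hL, ?_⟩
  simp only [ContinuousLinearMap.comp_apply, ContinuousLinearMap.flip_apply,
    ContinuousLinearMap.mul_apply', ← mul_assoc, ← add_mul, hLI, zero_mul]

lemma SliceHolomorphicOn.congr (hU : IsOpen U) (hg : SliceHolomorphicOn I g U)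
    (hgh : Set.EqOn g h U) : SliceHolomorphicOn I h U := by
  intro z hz
  obtain ⟨L, hL, hLI⟩ := hg z hz
  exact ⟨L, hL.congr_of_eventuallyEq (Filter.eventuallyEq_of_mem (hU.mem_nhds hz) hgh.symm),
    hLI⟩

lemma SliceHolomorphicOn.differentiableOn_comp (hI : I * I = -1)
    (hg : SliceHolomorphicOn I g U) (Ψ : Hq →L[ℝ] ℂ)
    (hΨ : ∀ q, Ψ (I * q) = Complex.I * Ψ q) :
    DifferentiableOn ℂ (Ψ ∘ g) U := by
  intro z hz
  obtain ⟨L, hL, hLI⟩ := hg z hz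
  have hΨL : (Ψ ∘L L) Complex.I = Complex.I • (Ψ ∘L L) 1 := by
    simp only [ContinuousLinearMap.comp_apply, (cauchyRiemann_iff hI).mp hLI, hΨ, smul_eq_mul]
  exact ((Ψ.hasFDerivAt.comp z hL).complexOfReal_hasFDerivAt hΨL).differentiableAt
    |>.differentiableWithinAt

lemma DifferentiableOn.sliceHolomorphicOn_sliceEmb (hI : I * I = -1) (hU : IsOpen U)
    {F : ℂ → ℂ} (hF : DifferentiableOn ℂ F U) :
    SliceHolomorphicOn I (sliceEmb I ∘ F) U := by
  intro z hz
  set F' := (fderiv ℂ F z).restrictScalars ℝ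
  have hF' : HasFDerivAt F F' z :=
    ((hF z hz).differentiableAt (hU.mem_nhds hz)).hasFDerivAt.restrictScalars ℝ
  refine ⟨sliceEmbCLM I ∘L F', (sliceEmbCLM I).hasFDerivAt.comp z hF',
    (cauchyRiemann_iff hI).mpr ?_⟩
  have hF'I : F' Complex.I = Complex.I * F' 1 := by
    change fderiv ℂ F z Complex.I = Complex.I * fderiv ℂ F z 1
    rw [← smul_eq_mul, ← map_smul, smul_eq_mul, mul_one]
  simp only [ContinuousLinearMap.comp_apply, sliceEmbCLM_apply, hF'I, sliceEmb_I_mul hI]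

end SliceHolomorphic

lemma isOpen_sliceEmb_preimage {Ω : Set Hq} (hΩ : @IsOpen Hq sliceTopology Ω) {I : Hq}
    (hI : I ∈ SphereS) : IsOpen (sliceEmb I ⁻¹' Ω) := by
  rw [sliceTopology, isOpen_iSup_iff] at hΩ
  exact isOpen_coinduced.mp (isOpen_iSup_iff.mp (hΩ I) hI)

/-- Splitting Lemma: `f` is slice regular on the slice-open set `Ω` iff for all
orthogonal `I, J ∈ 𝕊` the restriction of `f` to `Ω ∩ ℂ_I` splits as `F + G·J` with
`F, G` holomorphic `ℂ_I`-valued functions. -/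
theorem splitting_lemma (Ω : Set Hq) (hΩ : @IsOpen Hq sliceTopology Ω) (f : Hq → Hq) :
    SliceRegular f Ω ↔
      ∀ I ∈ SphereS, ∀ J ∈ SphereS, QOrth I J →
        ∃ F G : ℂ → ℂ,
          DifferentiableOn ℂ F (sliceEmb I ⁻¹' Ω) ∧
          DifferentiableOn ℂ G (sliceEmb I ⁻¹' Ω) ∧
          ∀ z ∈ sliceEmb I ⁻¹' Ω,
            f (sliceEmb I z) = sliceEmb I (F z) + sliceEmb I (G z) * J := by
  constructor
  · intro hf I hI J hJ hIJ
    have hI2 := mem_sphereS_iff_s10.mp hI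
    have hJ2 := mem_sphereS_iff_s10.mp hJ
    have hJI := anticommute_of_qOrth hI2 hJ2 hIJ
    refine ⟨(sliceProj I ∘L splitFst I) ∘ f ∘ sliceEmb I,
      (sliceProj I ∘L splitSnd I J) ∘ f ∘ sliceEmb I, ?_, ?_, fun z _ => ?_⟩
    · exact (hf I hI).differentiableOn_comp hI2 _ fun q => by
        simp only [ContinuousLinearMap.comp_apply, splitFst_mul_left, sliceProj_mul_left hI2]
    · exact (hf I hI).differentiableOn_comp hI2 _ fun q => by
        simp only [ContinuousLinearMap.comp_apply, splitSnd_mul_left, sliceProj_mul_left hI2]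
    · simp only [Function.comp_apply, ContinuousLinearMap.comp_apply,
        sliceEmb_sliceProj hI2 (commute_splitFst hI2 _),
        sliceEmb_sliceProj hI2 (commute_splitSnd hI2 hJI _), splitFst_add_splitSnd_mul hJ2]
  · intro h I hI
    have hI2 := mem_sphereS_iff_s10.mp hI
    have hU := isOpen_sliceEmb_preimage hΩ hI
    obtain ⟨J, hJ, hIJ⟩ := exists_qOrth hI2
    obtain ⟨F, G, hF, hG, hfFG⟩ := h I hI J (mem_sphereS_iff_s10.mpr hJ) hIJ
    exact ((hF.sliceHolomorphicOn_sliceEmb hI2 hU).add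
      ((hG.sliceHolomorphicOn_sliceEmb hI2 hU).mul_const J)).congr hU
        fun z hz => (hfFG z hz).symm
end
end
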